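/- arXiv:2004.05176 — 6 statements merged into one kernel-verified Lean document; each statement's English description precedes it below -/
import Mathlib

section
/- The flat-ground power dissipation function D is a seminorm on ℝ⁵, i.e., regarded as a function of the joint variable (ẋ, ẏ, θ̇, S_r, S_l) ∈ ℝ⁵ it satisfies: D(v) ≥ 0 for all v; D(λv) = |λ| · D(v) for all λ ∈ ℝ and v ∈ ℝ⁵; and D(v + w) ≤ D(v) + D(w) for all v, w ∈ ℝ⁵. -/
open MeasureTheory

/-- Flat-ground power dissipation function of a tracked vehicle. -/
noncomputable def flatD (L T W : ℝ) (xd yd td Sr Sl : ℝ) : ℝ :=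
  (∫ ry in (-T)..T, ∫ rx in (-L)..L,
    Real.sqrt ((xd + (W - ry) * td - Sr) ^ 2 + (yd + rx * td) ^ 2)) +
  (∫ ly in (-T)..T, ∫ lx in (-L)..L,
    Real.sqrt ((xd - (W + ly) * td - Sl) ^ 2 + (yd + lx * td) ^ 2))

/-- The flat-ground dissipation function viewed on the joint variable space ℝ⁵. -/
noncomputable def flatD5 (L T W : ℝ) (v : ℝ × ℝ × ℝ × ℝ × ℝ) : ℝ :=
  flatD L T W v.1 v.2.1 v.2.2.1 v.2.2.2.1 v.2.2.2.2

/-!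
Pointwise, each integrand is the Euclidean length of the slip velocity of one belt point, which
depends linearly on `(ẋ, ẏ, θ̇, S_r, S_l)`; so it is a seminorm of the joint variable. Integrating
seminorms against a positive measure preserves nonnegativity, absolute homogeneity and (by
monotonicity of the integral) subadditivity, and `D` is a sum of two such iterated integrals.
-/

open Set Function

namespace Seminorm

section Integral

variable {X V : Type*} [MeasurableSpace X] [AddCommGroup V] [Module ℝ V]

noncomputable def integral (μ : Measure X) (p : X → Seminorm ℝ V)
    (hp : ∀ v, Integrable (fun x => p x v) μ) : Seminorm ℝ V :=
  Seminorm.of (fun v => ∫ x, p x v ∂μ)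
    (fun v w => calc
      ∫ x, p x (v + w) ∂μ ≤ ∫ x, (p x v + p x w) ∂μ :=
        integral_mono_of_nonneg (.of_forall fun _ => apply_nonneg _ _) ((hp v).add (hp w))
          (.of_forall fun _ => map_add_le_add _ _ _)
      _ = ∫ x, p x v ∂μ + ∫ x, p x w ∂μ := integral_add (hp v) (hp w))
    (fun c v => by simp only [map_smul_eq_mul, MeasureTheory.integral_const_mul])

theorem integral_apply (μ : Measure X) (p : X → Seminorm ℝ V)
    (hp : ∀ v, Integrable (fun x => p x v) μ) (v : V) :
    integral μ p hp v = ∫ x, p x v ∂μ :=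
  rfl

end Integral

section IteratedSetIntegral

variable {X Y V E : Type*} [TopologicalSpace X] [MeasurableSpace X] [OpensMeasurableSpace X]
  [T2Space X] [FirstCountableTopology X] [LocallyCompactSpace X]
  [TopologicalSpace Y] [MeasurableSpace Y] [OpensMeasurableSpace Y] [T2Space Y]
  [AddCommGroup V] [Module ℝ V] [NormedAddCommGroup E] [NormedSpace ℝ E]

noncomputable def iteratedSetIntegralNorm (μ : Measure X) [IsFiniteMeasureOnCompacts μ]
    (ν : Measure Y) [IsLocallyFiniteMeasure ν] {s : Set X} {t : Set Y}
    (hs : IsCompact s) (ht : IsCompact t) (ℓ : X → Y → V →ₗ[ℝ] E)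
    (hℓ : ∀ v, Continuous (uncurry fun x y => ℓ x y v)) : Seminorm ℝ V :=
  integral (μ.restrict s)
    (fun x => integral (ν.restrict t) (fun y => (normSeminorm ℝ E).comp (ℓ x y)) fun v =>
      ((hℓ v).comp (Continuous.prodMk_right x)).norm.continuousOn.integrableOn_compact ht)
    fun v =>
      (continuous_parametric_integral_of_continuous (hℓ v).norm ht).continuousOn.integrableOn_compact
        hs

theorem iteratedSetIntegralNorm_apply (μ : Measure X) [IsFiniteMeasureOnCompacts μ]
    (ν : Measure Y) [IsLocallyFiniteMeasure ν] {s : Set X} {t : Set Y}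
    (hs : IsCompact s) (ht : IsCompact t) (ℓ : X → Y → V →ₗ[ℝ] E)
    (hℓ : ∀ v, Continuous (uncurry fun x y => ℓ x y v)) (v : V) :
    iteratedSetIntegralNorm μ ν hs ht ℓ hℓ v = ∫ x in s, ∫ y in t, ‖ℓ x y v‖ ∂ν ∂μ :=
  rfl

end IteratedSetIntegral

end Seminorm

theorem intervalIntegral_eq_setIntegral_Icc {E : Type*} [NormedAddCommGroup E] [NormedSpace ℝ E]
    {μ : Measure ℝ} [NullSingletonClass μ] {f : ℝ → E} {a b : ℝ} (hab : a ≤ b) :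
    ∫ x in a..b, f x ∂μ = ∫ x in Icc a b, f x ∂μ := by
  rw [intervalIntegral.integral_of_le hab, integral_Icc_eq_integral_Ioc]

/- Slip velocities of the belt points `(rx, ry)` (right) and `(lx, ly)` (left), encoded in
`ℂ ≅ ℝ²` so that the integrands of `flatD` are their norms. -/
@[simps]
noncomputable def rightSlip (W ry rx : ℝ) : ℝ × ℝ × ℝ × ℝ × ℝ →ₗ[ℝ] ℂ where
  toFun v := ↑(v.1 + (W - ry) * v.2.2.1 - v.2.2.2.1) + ↑(v.2.1 + rx * v.2.2.1) * Complex.I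
  map_add' v w := by simp only [Prod.fst_add, Prod.snd_add]; push_cast; ring
  map_smul' c v := by
    simp only [Prod.smul_fst, Prod.smul_snd, smul_eq_mul, RingHom.id_apply, Complex.real_smul]
    push_cast; ring

@[simps]
noncomputable def leftSlip (W ly lx : ℝ) : ℝ × ℝ × ℝ × ℝ × ℝ →ₗ[ℝ] ℂ where
  toFun v := ↑(v.1 - (W + ly) * v.2.2.1 - v.2.2.2.2) + ↑(v.2.1 + lx * v.2.2.1) * Complex.I
  map_add' v w := by simp only [Prod.fst_add, Prod.snd_add]; push_cast; ring
  map_smul' c v := by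
    simp only [Prod.smul_fst, Prod.smul_snd, smul_eq_mul, RingHom.id_apply, Complex.real_smul]
    push_cast; ring

theorem continuous_rightSlip (W : ℝ) (v : ℝ × ℝ × ℝ × ℝ × ℝ) :
    Continuous (uncurry fun ry rx => rightSlip W ry rx v) := by
  simp only [rightSlip_apply]
  fun_prop

theorem continuous_leftSlip (W : ℝ) (v : ℝ × ℝ × ℝ × ℝ × ℝ) :
    Continuous (uncurry fun ly lx => leftSlip W ly lx v) := by
  simp only [leftSlip_apply]
  fun_prop

theorem flatD5_eq_iteratedSetIntegralNorm {L T : ℝ} (hL : 0 ≤ L) (hT : 0 ≤ T) (W : ℝ) :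
    flatD5 L T W =
      ⇑(Seminorm.iteratedSetIntegralNorm volume volume (isCompact_Icc (a := -T) (b := T))
          (isCompact_Icc (a := -L) (b := L)) (rightSlip W) (continuous_rightSlip W) +
        Seminorm.iteratedSetIntegralNorm volume volume (isCompact_Icc (a := -T) (b := T))
          (isCompact_Icc (a := -L) (b := L)) (leftSlip W) (continuous_leftSlip W)) := by
  ext v
  simp only [flatD5, flatD, add_apply, Seminorm.iteratedSetIntegralNorm_apply,
    intervalIntegral_eq_setIntegral_Icc (neg_le_self hL),
    intervalIntegral_eq_setIntegral_Icc (neg_le_self hT), rightSlip_apply, leftSlip_apply,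
    Complex.norm_add_mul_I]

theorem flatD_is_seminorm_general (L T W : ℝ) (hL : 0 < L) (hT : 0 < T) :
    (∀ v : ℝ × ℝ × ℝ × ℝ × ℝ, 0 ≤ flatD5 L T W v) ∧
    (∀ (c : ℝ) (v : ℝ × ℝ × ℝ × ℝ × ℝ), flatD5 L T W (c • v) = |c| * flatD5 L T W v) ∧
    (∀ v w : ℝ × ℝ × ℝ × ℝ × ℝ, flatD5 L T W (v + w) ≤ flatD5 L T W v + flatD5 L T W w) := by
  rw [flatD5_eq_iteratedSetIntegralNorm hL.le hT.le]
  exact ⟨apply_nonneg _, fun c v => by rw [map_smul_eq_mul, Real.norm_eq_abs], map_add_le_add _⟩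

/-- the flat-ground power dissipation function is a seminorm on ℝ⁵. -/
theorem flatD_is_seminorm (L T W : ℝ) (hL : 0 < L) (hT : 0 < T) (hW : 0 < W) :
    (∀ v : ℝ × ℝ × ℝ × ℝ × ℝ, 0 ≤ flatD5 L T W v) ∧
    (∀ (c : ℝ) (v : ℝ × ℝ × ℝ × ℝ × ℝ), flatD5 L T W (c • v) = |c| * flatD5 L T W v) ∧
    (∀ v w : ℝ × ℝ × ℝ × ℝ × ℝ, flatD5 L T W (v + w) ≤ flatD5 L T W v + flatD5 L T W w) :=
  flatD_is_seminorm_general L T W hL hT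
end

section
/- For L, T > 0, the flat-ground power dissipation function vanishes exactly on a line: D(ẋ, ẏ, θ̇, S_r, S_l) = 0 if and only if there exists s ∈ ℝ such that (ẋ, ẏ, θ̇, S_r, S_l) = (s, 0, 0, s, s); equivalently, D = 0 iff ẏ = 0, θ̇ = 0, and ẋ = S_r = S_l. -/
open MeasureTheory

private lemma integral_linear (a b c d : ℝ) :
    ∫ x in a..b, (c + x * d) = c * (b - a) + d * ((b ^ 2 - a ^ 2) / 2) := by
  rw [intervalIntegral.integral_add (intervalIntegrable_const)
      ((by fun_prop : Continuous fun x : ℝ => x * d).intervalIntegrable _ _)]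
  simp [intervalIntegral.integral_mul_const, integral_id]
  ring

private lemma abs_zero_of_integral_abs_zero {a b : ℝ} (hab : a ≤ b)
    {f : ℝ → ℝ} (h : ∫ x in a..b, |f x| = 0) :
    ∫ x in a..b, f x = 0 := by
  have h1 : |∫ x in a..b, f x| ≤ ∫ x in a..b, |f x| :=
    intervalIntegral.abs_integral_le_integral_abs hab
  rw [h] at h1
  exact abs_eq_zero.mp (le_antisymm h1 (abs_nonneg _))

private lemma key_lin {L : ℝ} (hL : 0 < L) {c d : ℝ}
    (h : ∫ x in (-L)..L, |c + x * d| = 0) : c = 0 ∧ d = 0 := by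
  have hcont : Continuous fun x : ℝ => |c + x * d| := by fun_prop
  have hint : ∀ a b : ℝ, IntervalIntegrable (fun x => |c + x * d|) volume a b :=
    fun a b => hcont.intervalIntegrable a b
  have hsplit : (∫ x in (-L)..(0:ℝ), |c + x * d|) + ∫ x in (0:ℝ)..L, |c + x * d|
      = ∫ x in (-L)..L, |c + x * d| :=
    intervalIntegral.integral_add_adjacent_intervals (hint _ _) (hint _ _)
  have h1n : 0 ≤ ∫ x in (-L)..(0:ℝ), |c + x * d| :=
    intervalIntegral.integral_nonneg (by linarith) (fun u _ => abs_nonneg _)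
  have h2n : 0 ≤ ∫ x in (0:ℝ)..L, |c + x * d| :=
    intervalIntegral.integral_nonneg (by linarith) (fun u _ => abs_nonneg _)
  have h1 : ∫ x in (-L)..(0:ℝ), |c + x * d| = 0 := by linarith
  have h2 : ∫ x in (0:ℝ)..L, |c + x * d| = 0 := by linarith
  have e1 : ∫ x in (-L)..(0:ℝ), (c + x * d) = 0 :=
    abs_zero_of_integral_abs_zero (by linarith) h1
  have e2 : ∫ x in (0:ℝ)..L, (c + x * d) = 0 :=
    abs_zero_of_integral_abs_zero (by linarith) h2
  rw [integral_linear] at e1 e2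
  have e1' : c * L - d * L ^ 2 / 2 = 0 := by linear_combination e1
  have e2' : c * L + d * L ^ 2 / 2 = 0 := by linear_combination e2
  have hc : c = 0 := by
    have hcL : c * L = 0 := by linarith
    exact (mul_eq_zero.mp hcL).resolve_right (ne_of_gt hL)
  have hd : d = 0 := by
    have hdL : d * L ^ 2 = 0 := by linarith
    have hL2 : (0:ℝ) < L ^ 2 := by positivity
    exact (mul_eq_zero.mp hdL).resolve_right (ne_of_gt hL2)
  exact ⟨hc, hd⟩

/-- for L, T > 0 the flat-ground dissipation function vanishes exactly
on the line {(s, 0, 0, s, s) : s ∈ ℝ}. -/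
theorem flatD_zero_iff (L T W : ℝ) (hL : 0 < L) (hT : 0 < T)
    (xd yd td Sr Sl : ℝ) :
    flatD L T W xd yd td Sr Sl = 0 ↔
      ∃ s : ℝ, (xd, yd, td, Sr, Sl) = (s, (0 : ℝ), (0 : ℝ), s, s) := by
  constructor
  · intro h
    have hg1 : Continuous (Function.uncurry fun ry rx : ℝ =>
        Real.sqrt ((xd + (W - ry) * td - Sr) ^ 2 + (yd + rx * td) ^ 2)) := by
      apply Continuous.sqrt
      fun_prop
    have hg2 : Continuous (Function.uncurry fun ly lx : ℝ =>
        Real.sqrt ((xd - (W + ly) * td - Sl) ^ 2 + (yd + lx * td) ^ 2)) := by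
      apply Continuous.sqrt
      fun_prop
    have hI1c : Continuous fun ry => ∫ rx in (-L)..L,
        Real.sqrt ((xd + (W - ry) * td - Sr) ^ 2 + (yd + rx * td) ^ 2) :=
      intervalIntegral.continuous_parametric_intervalIntegral_of_continuous' (μ := volume) hg1 _ _
    have hI1n : ∀ ry : ℝ, 0 ≤ ∫ rx in (-L)..L,
        Real.sqrt ((xd + (W - ry) * td - Sr) ^ 2 + (yd + rx * td) ^ 2) := fun ry =>
      intervalIntegral.integral_nonneg (by linarith) (fun u _ => Real.sqrt_nonneg _)
    have hI2n : ∀ ly : ℝ, 0 ≤ ∫ lx in (-L)..L,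
        Real.sqrt ((xd - (W + ly) * td - Sl) ^ 2 + (yd + lx * td) ^ 2) := fun ly =>
      intervalIntegral.integral_nonneg (by linarith) (fun u _ => Real.sqrt_nonneg _)
    have ht1n : 0 ≤ ∫ ry in (-T)..T, ∫ rx in (-L)..L,
        Real.sqrt ((xd + (W - ry) * td - Sr) ^ 2 + (yd + rx * td) ^ 2) :=
      intervalIntegral.integral_nonneg (by linarith) (fun u _ => hI1n u)
    have ht2n : 0 ≤ ∫ ly in (-T)..T, ∫ lx in (-L)..L,
        Real.sqrt ((xd - (W + ly) * td - Sl) ^ 2 + (yd + lx * td) ^ 2) :=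
      intervalIntegral.integral_nonneg (by linarith) (fun u _ => hI2n u)
    have hDsum : (∫ ry in (-T)..T, ∫ rx in (-L)..L,
        Real.sqrt ((xd + (W - ry) * td - Sr) ^ 2 + (yd + rx * td) ^ 2)) +
        (∫ ly in (-T)..T, ∫ lx in (-L)..L,
        Real.sqrt ((xd - (W + ly) * td - Sl) ^ 2 + (yd + lx * td) ^ 2)) = 0 := h
    have ht1 : (∫ ry in (-T)..T, ∫ rx in (-L)..L,
        Real.sqrt ((xd + (W - ry) * td - Sr) ^ 2 + (yd + rx * td) ^ 2)) = 0 := by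
      linarith
    -- lower bound by the integral of |yd + rx * td|
    have hJc : Continuous fun x : ℝ => |yd + x * td| := by fun_prop
    have hJn : 0 ≤ ∫ rx in (-L)..L, |yd + rx * td| :=
      intervalIntegral.integral_nonneg (by linarith) (fun u _ => abs_nonneg _)
    have hJle : ∀ ry : ℝ, (∫ rx in (-L)..L, |yd + rx * td|) ≤ ∫ rx in (-L)..L,
        Real.sqrt ((xd + (W - ry) * td - Sr) ^ 2 + (yd + rx * td) ^ 2) := by
      intro ry
      apply intervalIntegral.integral_mono_on (by linarith)
        (hJc.intervalIntegrable _ _)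
        ((by apply Continuous.sqrt; fun_prop :
          Continuous fun rx : ℝ =>
            Real.sqrt ((xd + (W - ry) * td - Sr) ^ 2 + (yd + rx * td) ^ 2)).intervalIntegrable _ _)
      intro x _
      rw [← Real.sqrt_sq_eq_abs]
      exact Real.sqrt_le_sqrt (by nlinarith [sq_nonneg (xd + (W - ry) * td - Sr)])
    have hTJ : 2 * T * (∫ rx in (-L)..L, |yd + rx * td|) ≤
        ∫ ry in (-T)..T, ∫ rx in (-L)..L,
          Real.sqrt ((xd + (W - ry) * td - Sr) ^ 2 + (yd + rx * td) ^ 2) := by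
      have hmono := intervalIntegral.integral_mono_on (μ := volume) (by linarith : (-T) ≤ T)
        (intervalIntegrable_const (c := ∫ rx in (-L)..L, |yd + rx * td|))
        (hI1c.intervalIntegrable _ _) (fun x _ => hJle x)
      rw [intervalIntegral.integral_const] at hmono
      have : T - (-T) = 2 * T := by ring
      rw [this, smul_eq_mul] at hmono
      exact hmono
    have hJ0 : (∫ rx in (-L)..L, |yd + rx * td|) = 0 := by nlinarith
    obtain ⟨hyd, htd⟩ := key_lin hL hJ0
    subst hyd htd
    simp only [flatD, mul_zero, add_zero, zero_add, sub_zero] at h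
    norm_num [Real.sqrt_sq_eq_abs, intervalIntegral.integral_const, smul_eq_mul] at h
    have h' : ((L + L) * (T + T)) * (|xd - Sr| + |xd - Sl|) = 0 := by
      linear_combination h
    have hsum : |xd - Sr| + |xd - Sl| = 0 :=
      (mul_eq_zero.mp h').resolve_left (by positivity)
    have har : |xd - Sr| = 0 := by
      have := abs_nonneg (xd - Sr); have := abs_nonneg (xd - Sl); linarith
    have hal : |xd - Sl| = 0 := by
      have := abs_nonneg (xd - Sr); have := abs_nonneg (xd - Sl); linarith
    have hSr : Sr = xd := by
      have := abs_eq_zero.mp har; linarith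
    have hSl : Sl = xd := by
      have := abs_eq_zero.mp hal; linarith
    exact ⟨xd, by simp [hSr, hSl]⟩
  · rintro ⟨s, hs⟩
    simp only [Prod.mk.injEq] at hs
    obtain ⟨h1, h2, h3, h4, h5⟩ := hs
    subst h1 h2 h3 h4 h5
    simp [flatD]
end

section
/- The set of global minimizers of the flat-ground power dissipation function scales linearly with the track speeds: for every λ ∈ ℝ, if (ẋ, ẏ, θ̇) is a global minimizer of D(·, ·, ·, S_r, S_l) over ℝ³, then (λẋ, λẏ, λθ̇) is a global minimizer of D(·, ·, ·, λS_r, λS_l) over ℝ³. -/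
open MeasureTheory

lemma sqrt_scale (lam A B : ℝ) :
    Real.sqrt ((lam * A) ^ 2 + (lam * B) ^ 2) = |lam| * Real.sqrt (A ^ 2 + B ^ 2) := by
  have h : (lam * A) ^ 2 + (lam * B) ^ 2 = lam ^ 2 * (A ^ 2 + B ^ 2) := by ring
  rw [h, Real.sqrt_mul (sq_nonneg lam), Real.sqrt_sq_eq_abs]

lemma flatD_nonneg (L T W xd yd td Sr Sl : ℝ) (hL : 0 < L) (hT : 0 < T) :
    0 ≤ flatD L T W xd yd td Sr Sl := by
  have h1 : ∀ (f : ℝ → ℝ → ℝ), (∀ y x, 0 ≤ f y x) →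
      0 ≤ ∫ y in (-T)..T, ∫ x in (-L)..L, f y x := by
    intro f hf
    apply intervalIntegral.integral_nonneg (by linarith)
    intro y _
    exact intervalIntegral.integral_nonneg (by linarith) (fun x _ => hf y x)
  exact add_nonneg (h1 _ fun y x => Real.sqrt_nonneg _) (h1 _ fun y x => Real.sqrt_nonneg _)

lemma flatD_scale (L T W lam xd yd td Sr Sl : ℝ) :
    flatD L T W (lam * xd) (lam * yd) (lam * td) (lam * Sr) (lam * Sl) =
      |lam| * flatD L T W xd yd td Sr Sl := by
  unfold flatD
  rw [mul_add]
  congr 1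
  · rw [← intervalIntegral.integral_const_mul]
    apply intervalIntegral.integral_congr
    intro ry _
    simp only
    rw [← intervalIntegral.integral_const_mul]
    apply intervalIntegral.integral_congr
    intro rx _
    simp only
    rw [← sqrt_scale]
    ring_nf
  · rw [← intervalIntegral.integral_const_mul]
    apply intervalIntegral.integral_congr
    intro ly _
    simp only
    rw [← intervalIntegral.integral_const_mul]
    apply intervalIntegral.integral_congr
    intro lx _
    simp only
    rw [← sqrt_scale]
    ring_nf

/-- the set of global minimizers scales linearly with the track speeds. -/
theorem flatD_minimizer_scaling (L T W : ℝ) (hL : 0 < L) (hT : 0 < T) (hW : 0 < W)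
    (lam Sr Sl xd yd td : ℝ)
    (hmin : ∀ a b e : ℝ, flatD L T W xd yd td Sr Sl ≤ flatD L T W a b e Sr Sl) :
    ∀ a b e : ℝ,
      flatD L T W (lam * xd) (lam * yd) (lam * td) (lam * Sr) (lam * Sl) ≤
        flatD L T W a b e (lam * Sr) (lam * Sl) := by
  intro a b e
  rcases eq_or_ne lam 0 with rfl | hlam
  · rw [flatD_scale]
    simp only [abs_zero, zero_mul, zero_mul]
    exact flatD_nonneg L T W a b e 0 0 hL hT
  · have h : flatD L T W a b e (lam * Sr) (lam * Sl) =
        |lam| * flatD L T W (a / lam) (b / lam) (e / lam) Sr Sl := by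
      rw [← flatD_scale]
      rw [mul_div_cancel₀ _ hlam, mul_div_cancel₀ _ hlam, mul_div_cancel₀ _ hlam]
    rw [h, flatD_scale]
    exact mul_le_mul_of_nonneg_left (hmin _ _ _) (abs_nonneg lam)
end

section
/- If both track speeds are equal, the quasi-static model predicts exact straight-line motion: for L, T > 0 and S ∈ ℝ, the point (ẋ, ẏ, θ̇) = (S, 0, 0) is the unique global minimizer over ℝ³ of (ẋ, ẏ, θ̇) ↦ D(ẋ, ẏ, θ̇, S, S), and the minimum value is 0. -/
open MeasureTheory

lemma abs_le_sqrt_add (a b : ℝ) : |b| ≤ Real.sqrt (a ^ 2 + b ^ 2) := by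
  rw [← Real.sqrt_sq_eq_abs]
  exact Real.sqrt_le_sqrt (by nlinarith [sq_nonneg a])

/-- the integral of `|yd + x * td|` over a nondegenerate interval is positive if `td ≠ 0`. -/
lemma pos_inner {L yd td : ℝ} (hL : 0 < L) (htd : td ≠ 0) :
    0 < ∫ rx in (-L)..L, |yd + rx * td| := by
  have hle : (-L : ℝ) ≤ L := by linarith
  rw [intervalIntegral.integral_of_le hle]
  rw [MeasureTheory.setIntegral_pos_iff_support_of_nonneg_ae
    (by filter_upwards with x using abs_nonneg _)
    ((by fun_prop : Continuous fun x : ℝ => |yd + x * td|).integrableOn_Ioc)]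
  have hsub : Set.Ioc (-L) L \ {-yd / td} ⊆
      Function.support (fun x => |yd + x * td|) ∩ Set.Ioc (-L) L := by
    rintro x ⟨hx1, hx2⟩
    refine ⟨?_, hx1⟩
    simp only [Function.mem_support, ne_eq, abs_eq_zero]
    intro h
    apply hx2
    have : x = -yd / td := by field_simp; linarith
    simp [this]
  calc (0 : ENNReal) < volume (Set.Ioc (-L) L \ {-yd / td}) := by
        rw [measure_diff_null (measure_singleton _)]
        simpa using by linarith
    _ ≤ _ := measure_mono hsub

/-- with equal track speeds the unique global minimizer is straight-line
motion (S, 0, 0), with minimum value 0. -/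
theorem flatD_equal_speeds_unique_min (L T W : ℝ) (hL : 0 < L) (hT : 0 < T) (hW : 0 < W)
    (S : ℝ) :
    flatD L T W S 0 0 S S = 0 ∧
    (∀ xd yd td : ℝ, (xd, yd, td) ≠ (S, (0 : ℝ), (0 : ℝ)) →
      0 < flatD L T W xd yd td S S) := by
  have hLle : (-L : ℝ) ≤ L := by linarith
  have hTle : (-T : ℝ) ≤ T := by linarith
  constructor
  · simp [flatD]
  · intro xd yd td hne
    -- the left-track term is nonnegative
    have hleft : 0 ≤ ∫ ly in (-T)..T, ∫ lx in (-L)..L,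
        Real.sqrt ((xd - (W + ly) * td - S) ^ 2 + (yd + lx * td) ^ 2) := by
      apply intervalIntegral.integral_nonneg hTle
      intro ly _
      apply intervalIntegral.integral_nonneg hLle
      intro lx _
      exact Real.sqrt_nonneg _
    -- the right-track term is positive
    have hright : 0 < ∫ ry in (-T)..T, ∫ rx in (-L)..L,
        Real.sqrt ((xd + (W - ry) * td - S) ^ 2 + (yd + rx * td) ^ 2) := by
      by_cases htd : td = 0
      · -- constant integrand
        subst htd
        have hxy : (xd - S) ^ 2 + yd ^ 2 ≠ 0 := by
          intro h
          apply hne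
          have h1 : xd - S = 0 := by nlinarith [sq_nonneg (xd - S), sq_nonneg yd]
          have h2 : yd = 0 := by nlinarith [sq_nonneg (xd - S), sq_nonneg yd]
          simp [Prod.ext_iff, h2]; linarith
        have hpos : 0 < Real.sqrt ((xd - S) ^ 2 + yd ^ 2) :=
          Real.sqrt_pos.mpr (lt_of_le_of_ne (by positivity) (Ne.symm hxy))
        simp only [mul_zero, add_zero, intervalIntegral.integral_const, smul_eq_mul]
        have : (0:ℝ) < (L - -L) * Real.sqrt ((xd - S) ^ 2 + yd ^ 2) := by
          apply mul_pos (by linarith) hpos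
        nlinarith [this]
      · -- td ≠ 0 : lower bound by the inner integral of |yd + rx td|
        set J := ∫ rx in (-L)..L, |yd + rx * td| with hJ
        have hJpos : 0 < J := pos_inner hL htd
        have hcont : Continuous (Function.uncurry fun (ry rx : ℝ) =>
            Real.sqrt ((xd + (W - ry) * td - S) ^ 2 + (yd + rx * td) ^ 2)) := by
          apply Real.continuous_sqrt.comp
          fun_prop
        have hFcont : Continuous (fun ry => ∫ rx in (-L)..L,
            Real.sqrt ((xd + (W - ry) * td - S) ^ 2 + (yd + rx * td) ^ 2)) :=
          intervalIntegral.continuous_parametric_intervalIntegral_of_continuous' hcont _ _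
        have hmono : ∀ ry ∈ Set.Icc (-T) T, J ≤ ∫ rx in (-L)..L,
            Real.sqrt ((xd + (W - ry) * td - S) ^ 2 + (yd + rx * td) ^ 2) := by
          intro ry _
          apply intervalIntegral.integral_mono_on hLle
          · exact ((continuous_const.add (continuous_id.mul continuous_const)).abs).intervalIntegrable _ _
          · exact (by fun_prop : Continuous fun rx : ℝ => Real.sqrt ((xd + (W - ry) * td - S) ^ 2 + (yd + rx * td) ^ 2)).intervalIntegrable _ _
          · intro x _
            exact abs_le_sqrt_add _ _
        have : (T - -T) * J ≤ ∫ ry in (-T)..T, ∫ rx in (-L)..L,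
            Real.sqrt ((xd + (W - ry) * td - S) ^ 2 + (yd + rx * td) ^ 2) := by
          have := intervalIntegral.integral_mono_on hTle
            (intervalIntegrable_const (μ := volume)) (hFcont.intervalIntegrable _ _) hmono
          simpa using this
        have hTJ : 0 < (T - -T) * J := by
          apply mul_pos (by linarith) hJpos
        linarith
    unfold flatD
    linarith
end

section
/- For L, T > 0 and any track speeds S_r, S_l ∈ ℝ, there exists a global minimizer (ẋ*, ẏ*, θ̇*) ∈ ℝ³ of (ẋ, ẏ, θ̇) ↦ D(ẋ, ẏ, θ̇, S_r, S_l) with ẋ* = (S_r + S_l)/2 and ẏ* = 0; i.e., the predicted forward velocity equals the average of the track speeds and the predicted lateral velocity is zero. -/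
open MeasureTheory

/-
For fixed angular velocity `θ̇`, reflecting the track coordinates `(r_x, r_y) ↦ (-r_x, -r_y)` swaps
the two track integrals of `D`, so `D` is invariant under `(ẋ, ẏ) ↦ (S_r + S_l - ẋ, -ẏ)`. Each
integrand is the Euclidean norm of a vector affine in `(ẋ, ẏ)`, so `D` is convex in `(ẋ, ẏ)`;
averaging a point with its reflection therefore does not increase `D`, and it suffices to minimize
`θ̇ ↦ D((S_r + S_l)/2, 0, θ̇)`. That function is continuous and bounded below by `4 T L² |θ̇|`
(the slip `r_x θ̇` alone), so it attains its minimum.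
-/

open intervalIntegral

lemma sqrt_sq_add_sq_midpoint_le (x x' z z' : ℝ) :
    √(((x + x') / 2) ^ 2 + ((z + z') / 2) ^ 2) ≤ (√(x ^ 2 + z ^ 2) + √(x' ^ 2 + z' ^ 2)) / 2 := by
  have key : ‖(⟨(x + x') / 2, (z + z') / 2⟩ : ℂ)‖ ≤ (‖(⟨x, z⟩ : ℂ)‖ + ‖(⟨x', z'⟩ : ℂ)‖) / 2 := by
    have hmid : (⟨(x + x') / 2, (z + z') / 2⟩ : ℂ) = (⟨x, z⟩ + ⟨x', z'⟩) / 2 := by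
      apply Complex.ext <;> simp
    rw [hmid, norm_div, Complex.norm_two]
    gcongr
    exact norm_add_le _ _
  simpa only [Complex.norm_eq_sqrt_sq_add_sq] using key

lemma integral_abs_neg_self (L : ℝ) (hL : 0 ≤ L) : ∫ x in -L..L, |x| = L ^ 2 := by
  have half : ∫ x in (0 : ℝ)..L, |x| = L ^ 2 / 2 := by
    rw [integral_congr fun x hx => abs_of_nonneg (Set.uIcc_of_le hL ▸ hx).1, integral_id]
    ring
  have reflect : ∫ x in -L..0, |x| = ∫ x in (0 : ℝ)..L, |x| := by
    simpa using (integral_comp_neg (a := 0) (b := L) fun x => |x|).symm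
  rw [← integral_add_adjacent_intervals (b := 0) (continuous_abs.intervalIntegrable _ _)
    (continuous_abs.intervalIntegrable _ _), reflect, half]
  ring

section IteratedIntegral

variable {a b c d : ℝ} {f g h : ℝ → ℝ → ℝ}

lemma intervalIntegral_intervalIntegral_mono (hab : a ≤ b) (hcd : c ≤ d)
    (hf : Continuous (Function.uncurry f)) (hg : Continuous (Function.uncurry g))
    (hfg : ∀ y z, f y z ≤ g y z) :
    ∫ y in a..b, ∫ z in c..d, f y z ≤ ∫ y in a..b, ∫ z in c..d, g y z :=
  integral_mono hab
    ((continuous_parametric_intervalIntegral_of_continuous' hf c d).intervalIntegrable _ _)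
    ((continuous_parametric_intervalIntegral_of_continuous' hg c d).intervalIntegrable _ _)
    fun y => integral_mono hcd ((hf.uncurry_left y).intervalIntegrable _ _)
      ((hg.uncurry_left y).intervalIntegrable _ _) (hfg y)

lemma intervalIntegral_intervalIntegral_add
    (hf : Continuous (Function.uncurry f)) (hg : Continuous (Function.uncurry g)) :
    ∫ y in a..b, ∫ z in c..d, (f y z + g y z) =
      (∫ y in a..b, ∫ z in c..d, f y z) + ∫ y in a..b, ∫ z in c..d, g y z := by
  rw [← integral_add
    ((continuous_parametric_intervalIntegral_of_continuous' hf c d).intervalIntegrable _ _)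
    ((continuous_parametric_intervalIntegral_of_continuous' hg c d).intervalIntegrable _ _)]
  exact integral_congr fun y _ => integral_add ((hf.uncurry_left y).intervalIntegrable _ _)
    ((hg.uncurry_left y).intervalIntegrable _ _)

lemma intervalIntegral_intervalIntegral_le_midpoint (hab : a ≤ b) (hcd : c ≤ d)
    (hf : Continuous (Function.uncurry f)) (hg : Continuous (Function.uncurry g))
    (hh : Continuous (Function.uncurry h)) (hfgh : ∀ y z, h y z ≤ (f y z + g y z) / 2) :
    ∫ y in a..b, ∫ z in c..d, h y z ≤
      ((∫ y in a..b, ∫ z in c..d, f y z) + ∫ y in a..b, ∫ z in c..d, g y z) / 2 := by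
  calc ∫ y in a..b, ∫ z in c..d, h y z
      ≤ ∫ y in a..b, ∫ z in c..d, (f y z + g y z) / 2 :=
        intervalIntegral_intervalIntegral_mono hab hcd hh (by fun_prop) hfgh
    _ = _ := by
      simp only [intervalIntegral.integral_div, intervalIntegral_intervalIntegral_add hf hg]

lemma intervalIntegral_intervalIntegral_eq_of_eq_comp_neg (hfg : ∀ y z, f y z = g (-y) (-z)) :
    ∫ y in -b..b, ∫ z in -d..d, f y z = ∫ y in -b..b, ∫ z in -d..d, g y z := by
  simpa [hfg] using integral_comp_neg (a := -b) (b := b) fun y => ∫ z in -d..d, g y z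

end IteratedIntegral

lemma continuous_flatD (L T W a b Sr Sl : ℝ) : Continuous fun e => flatD L T W a b e Sr Sl := by
  unfold flatD
  fun_prop

lemma flatD_reflect (L T W a b e Sr Sl : ℝ) :
    flatD L T W (Sr + Sl - a) (-b) e Sr Sl = flatD L T W a b e Sr Sl := by
  unfold flatD
  rw [add_comm]
  congr 1 <;> apply intervalIntegral_intervalIntegral_eq_of_eq_comp_neg <;> intro y z <;> ring_nf

section FlatD

variable {L T : ℝ}

lemma flatD_midpoint_le (hL : 0 ≤ L) (hT : 0 ≤ T) (W a a' b b' e Sr Sl : ℝ) :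
    flatD L T W ((a + a') / 2) ((b + b') / 2) e Sr Sl ≤
      (flatD L T W a b e Sr Sl + flatD L T W a' b' e Sr Sl) / 2 := by
  unfold flatD
  rw [add_add_add_comm]
  refine le_of_le_of_eq (add_le_add ?_ ?_) (add_div _ _ 2).symm <;>
    refine intervalIntegral_intervalIntegral_le_midpoint (by linarith) (by linarith)
      (by fun_prop) (by fun_prop) (by fun_prop) fun y z => ?_ <;>
    convert sqrt_sq_add_sq_midpoint_le _ _ _ _ using 4 <;> ring

lemma mul_abs_le_intervalIntegral_intervalIntegral_sqrt (hL : 0 ≤ L) (hT : 0 ≤ T)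
    {u : ℝ → ℝ} (hu : Continuous u) (e : ℝ) :
    2 * T * L ^ 2 * |e| ≤ ∫ y in -T..T, ∫ z in -L..L, √(u y ^ 2 + (z * e) ^ 2) := by
  calc 2 * T * L ^ 2 * |e| = ∫ _ in -T..T, ∫ z in -L..L, |z| * |e| := by
        simp only [intervalIntegral.integral_mul_const, integral_abs_neg_self L hL,
          intervalIntegral.integral_const]
        rw [smul_eq_mul]; ring
    _ ≤ _ := intervalIntegral_intervalIntegral_mono (by linarith) (by linarith)
        (by fun_prop) (by fun_prop) fun y z => by
          rw [← abs_mul, ← Real.sqrt_sq_eq_abs]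
          exact Real.sqrt_le_sqrt (le_add_of_nonneg_left (sq_nonneg _))

lemma mul_abs_le_flatD (hL : 0 ≤ L) (hT : 0 ≤ T) (W a e Sr Sl : ℝ) :
    4 * T * L ^ 2 * |e| ≤ flatD L T W a 0 e Sr Sl := by
  have right := mul_abs_le_intervalIntegral_intervalIntegral_sqrt hL hT
    (u := fun y => a + (W - y) * e - Sr) (by fun_prop) e
  have left := mul_abs_le_intervalIntegral_intervalIntegral_sqrt hL hT
    (u := fun y => a - (W + y) * e - Sl) (by fun_prop) e
  unfold flatD
  simp only [zero_add]
  linarith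

lemma exists_forall_flatD_le (hL : 0 < L) (hT : 0 < T) (W a Sr Sl : ℝ) :
    ∃ td, ∀ e, flatD L T W a 0 td Sr Sl ≤ flatD L T W a 0 e Sr Sl := by
  refine (continuous_flatD L T W a 0 Sr Sl).exists_forall_le
    (Filter.tendsto_atTop_mono (mul_abs_le_flatD hL.le hT.le W a · Sr Sl) ?_)
  have hslope : 0 < 4 * T * L ^ 2 := by positivity
  simpa using (tendsto_norm_cocompact_atTop (E := ℝ)).const_mul_atTop hslope

end FlatD

theorem flatD_min_forward_average_general (L T W : ℝ) (hL : 0 < L) (hT : 0 < T)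
    (Sr Sl : ℝ) :
    ∃ td : ℝ, ∀ a b e : ℝ,
      flatD L T W ((Sr + Sl) / 2) 0 td Sr Sl ≤ flatD L T W a b e Sr Sl := by
  obtain ⟨td, htd⟩ := exists_forall_flatD_le hL hT W ((Sr + Sl) / 2) Sr Sl
  refine ⟨td, fun a b e => ?_⟩
  calc flatD L T W ((Sr + Sl) / 2) 0 td Sr Sl
      ≤ flatD L T W ((Sr + Sl) / 2) 0 e Sr Sl := htd e
    _ = flatD L T W ((a + (Sr + Sl - a)) / 2) ((b + -b) / 2) e Sr Sl := by ring_nf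
    _ ≤ (flatD L T W a b e Sr Sl + flatD L T W (Sr + Sl - a) (-b) e Sr Sl) / 2 :=
        flatD_midpoint_le hL.le hT.le W a _ b _ e Sr Sl
    _ = flatD L T W a b e Sr Sl := by rw [flatD_reflect]; ring

/-- there is a global minimizer with forward velocity the average of the
track speeds and zero lateral velocity. -/
theorem flatD_min_forward_average (L T W : ℝ) (hL : 0 < L) (hT : 0 < T) (hW : 0 < W)
    (Sr Sl : ℝ) :
    ∃ td : ℝ, ∀ a b e : ℝ,
      flatD L T W ((Sr + Sl) / 2) 0 td Sr Sl ≤ flatD L T W a b e Sr Sl :=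
  flatD_min_forward_average_general L T W hL hT Sr Sl
end

section
/- For the grouser-contact power dissipation function with T > 0, at least one grouser contact per track (N ≥ 1), and strictly positive weights α_{n,r}, α_{n,l} > 0, if both track speeds equal S ∈ ℝ, then (ẋ, ẏ, θ̇) = (S, 0, 0) is the unique global minimizer over ℝ³ of (ẋ, ẏ, θ̇) ↦ D_g(ẋ, ẏ, θ̇, S, S), and the minimum value is 0. -/
open MeasureTheory

/-- Grouser-contact power dissipation function: each track contacts the ground along
N line contacts (grouser tips) at longitudinal positions `pr n`, `pl n`, with
positive weights `ar n`, `al n`. -/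
noncomputable def grouserD (T W : ℝ) (N : ℕ) (pr pl ar al : Fin N → ℝ)
    (xd yd td Sr Sl : ℝ) : ℝ :=
  (∑ n : Fin N, ar n *
    ∫ ry in (-T)..T, Real.sqrt ((xd + (W - ry) * td - Sr) ^ 2 + (yd + pr n * td) ^ 2)) +
  (∑ n : Fin N, al n *
    ∫ ly in (-T)..T, Real.sqrt ((xd - (W + ly) * td - Sl) ^ 2 + (yd + pl n * td) ^ 2))

lemma sqrt_cont (A B C : ℝ) : Continuous fun r : ℝ => Real.sqrt ((A + B * r) ^ 2 + C ^ 2) := by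
  fun_prop

lemma key_int_pos (T A B C : ℝ) (hT : 0 < T) (h : ¬(A = 0 ∧ B = 0 ∧ C = 0)) :
    0 < ∫ r in (-T)..T, Real.sqrt ((A + B * r) ^ 2 + C ^ 2) := by
  set f : ℝ → ℝ := fun r => Real.sqrt ((A + B * r) ^ 2 + C ^ 2) with hf
  have hfi : IntervalIntegrable f volume (-T) T :=
    (sqrt_cont A B C).intervalIntegrable _ _
  rw [intervalIntegral.integral_pos_iff_support_of_nonneg_ae
      (Filter.Eventually.of_forall fun r => Real.sqrt_nonneg _) hfi]
  refine ⟨by linarith, ?_⟩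
  set Z : Set ℝ := {r | A + B * r = 0 ∧ C = 0} with hZ
  have hZsub : Z.Subsingleton := by
    intro r1 h1 r2 h2
    by_cases hB : B = 0
    · exact absurd ⟨by simpa [hB] using h1.1, hB, h1.2⟩ h
    · have : B * r1 = B * r2 := by linarith [h1.1, h2.1]
      exact mul_left_cancel₀ hB this
  have hsub : Set.Ioc (-T) T \ Z ⊆ Function.support f ∩ Set.Ioc (-T) T := by
    intro r hr
    refine ⟨?_, hr.1⟩
    have hrZ : ¬(A + B * r = 0 ∧ C = 0) := hr.2
    have hpos : 0 < (A + B * r) ^ 2 + C ^ 2 := by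
      rcases not_and_or.mp hrZ with hc | hc
      · have := sq_pos_of_ne_zero hc
        nlinarith [sq_nonneg C]
      · have := sq_pos_of_ne_zero hc
        nlinarith [sq_nonneg (A + B * r)]
    simp only [Function.mem_support, hf]
    exact ne_of_gt (Real.sqrt_pos.mpr hpos)
  calc (0 : ENNReal) < volume (Set.Ioc (-T) T \ Z) := by
        rw [measure_diff_null (hZsub.measure_zero volume)]
        simp [Real.volume_Ioc]
        linarith
    _ ≤ volume (Function.support f ∩ Set.Ioc (-T) T) := measure_mono hsub

/-- with equal track speeds, the unique global minimizer of the
grouser-contact dissipation function is (S, 0, 0), with minimum value 0. -/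
theorem grouserD_equal_speeds_unique_min (T W : ℝ) (hT : 0 < T) (hW : 0 < W)
    (N : ℕ) (hN : 1 ≤ N) (pr pl ar al : Fin N → ℝ)
    (har : ∀ n, 0 < ar n) (hal : ∀ n, 0 < al n) (S : ℝ) :
    grouserD T W N pr pl ar al S 0 0 S S = 0 ∧
    (∀ xd yd td : ℝ, (xd, yd, td) ≠ (S, (0 : ℝ), (0 : ℝ)) →
      0 < grouserD T W N pr pl ar al xd yd td S S) := by
  constructor
  · simp [grouserD]
  · intro xd yd td hne
    have n0 : Fin N := ⟨0, hN⟩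
    -- all integrals are nonneg
    have hnonneg : ∀ (p c : ℝ) (g : ℝ → ℝ), (∀ r, 0 ≤ g r) →
        (0:ℝ) ≤ ∫ r in (-T)..T, g r := fun p c g hg =>
      intervalIntegral.integral_nonneg (by linarith) (fun r _ => hg r)
    have hIr : ∀ n : Fin N, (0:ℝ) ≤
        ∫ ry in (-T)..T, Real.sqrt ((xd + (W - ry) * td - S) ^ 2 + (yd + pr n * td) ^ 2) :=
      fun n => intervalIntegral.integral_nonneg (by linarith) (fun r _ => Real.sqrt_nonneg _)
    have hIl : ∀ n : Fin N, (0:ℝ) ≤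
        ∫ ly in (-T)..T, Real.sqrt ((xd - (W + ly) * td - S) ^ 2 + (yd + pl n * td) ^ 2) :=
      fun n => intervalIntegral.integral_nonneg (by linarith) (fun r _ => Real.sqrt_nonneg _)
    -- the key integral is positive
    have hkey : 0 < ∫ ry in (-T)..T,
        Real.sqrt ((xd + (W - ry) * td - S) ^ 2 + (yd + pr n0 * td) ^ 2) := by
      have h := key_int_pos T (xd + W * td - S) (-td) (yd + pr n0 * td) hT ?_
      · have heq : ∀ ry : ℝ, (xd + W * td - S + -td * ry) ^ 2 + (yd + pr n0 * td) ^ 2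
            = (xd + (W - ry) * td - S) ^ 2 + (yd + pr n0 * td) ^ 2 := fun ry => by ring
        simpa only [heq] using h
      · rintro ⟨hA, hB, hC⟩
        have htd : td = 0 := by linarith
        apply hne
        subst htd
        simp only [mul_zero, add_zero] at hA hC
        have : xd = S := by linarith
        simp [this, hC]
    have h1 : ar n0 * (∫ ry in (-T)..T,
        Real.sqrt ((xd + (W - ry) * td - S) ^ 2 + (yd + pr n0 * td) ^ 2)) ≤
        ∑ n : Fin N, ar n *
          ∫ ry in (-T)..T, Real.sqrt ((xd + (W - ry) * td - S) ^ 2 + (yd + pr n * td) ^ 2) :=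
      Finset.single_le_sum (f := fun n : Fin N => ar n * _)
        (fun n _ => mul_nonneg (har n).le (hIr n)) (Finset.mem_univ n0)
    have h2 : (0:ℝ) ≤ ∑ n : Fin N, al n *
        ∫ ly in (-T)..T, Real.sqrt ((xd - (W + ly) * td - S) ^ 2 + (yd + pl n * td) ^ 2) :=
      Finset.sum_nonneg fun n _ => mul_nonneg (hal n).le (hIl n)
    have hpos : 0 < ar n0 * ∫ ry in (-T)..T,
        Real.sqrt ((xd + (W - ry) * td - S) ^ 2 + (yd + pr n0 * td) ^ 2) :=
      mul_pos (har n0) hkey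
    unfold grouserD
    linarith
end
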